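/- Let $k$ be a field of characteristic zero, $F = k(x_1, \dots, x_{m-1})$, $K = F(x_m)$, and $\overline{F}$ the algebraic closure of $F$. If $f \in \overline{F}(x_m)$ satisfies $\partial_m(f) \in K$, then $f = g + c_0$ where $g \in K$ and $c_0 \in \overline{F}$ is the constant part of $f$. Consequently, $f \in K$ if and only if $c_0 \in F$. -/

import Mathlib

/-- The embedding of `RatFunc F` into `RatFunc E` induced by a field embedding
`ψ : F →+* E`, sending `num/denom` to `(num.map ψ)/(denom.map ψ)`. -/
noncomputable def liftRF {F E : Type*} [Field F] [Field E] (ψ : F →+* E)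
    (f : RatFunc F) : RatFunc E :=
  algebraMap (Polynomial E) (RatFunc E) (f.num.map ψ) /
    algebraMap (Polynomial E) (RatFunc E) (f.denom.map ψ)

/-!
An `F`-automorphism `σ` of `F̄` acts on `F̄(X)` coefficientwise and commutes with `d/dX`.
Since `f'` has coefficients in `F`, `σ f - f` has zero derivative and is therefore a constant,
which comparing polynomial parts identifies as `σ c₀ - c₀`. Hence `f - c₀` is fixed by
`Gal(F̄/F)`, and so are the coefficients of its reduced numerator and denominator, which
therefore lie in `F`.
-/

open Polynomial
open scoped nonZeroDivisors

namespace RatFunc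

section CoeffMap

variable {K L M : Type*} [Field K] [Field L] [Field M]

theorem nonZeroDivisors_le_comap_mapRingHom (ψ : K →+* L) :
    K[X]⁰ ≤ L[X]⁰.comap (Polynomial.mapRingHom ψ) := fun _ hp =>
  mem_nonZeroDivisors_of_ne_zero <|
    (Polynomial.map_ne_zero_iff ψ.injective).mpr (nonZeroDivisors.ne_zero hp)

noncomputable def coeffMap (ψ : K →+* L) : RatFunc K →+* RatFunc L :=
  mapRingHom (Polynomial.mapRingHom ψ) (nonZeroDivisors_le_comap_mapRingHom ψ)

theorem coeffMap_algebraMap_div (ψ : K →+* L) (p q : K[X]) :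
    coeffMap ψ (algebraMap _ _ p / algebraMap _ _ q) =
      algebraMap _ _ (p.map ψ) / algebraMap _ _ (q.map ψ) := by
  have h := map_apply_div _ (nonZeroDivisors_le_comap_mapRingHom ψ) p q
  simp only [Polynomial.coe_mapRingHom] at h
  exact (congrFun (coe_mapRingHom_eq_coe_map _ _) _).trans h

theorem coeffMap_algebraMap (ψ : K →+* L) (p : K[X]) :
    coeffMap ψ (algebraMap _ _ p) = algebraMap _ _ (p.map ψ) := by
  simpa using coeffMap_algebraMap_div ψ p 1

theorem coeffMap_C (ψ : K →+* L) (a : K) : coeffMap ψ (C a) = C (ψ a) := by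
  rw [← algebraMap_C, coeffMap_algebraMap, map_C, algebraMap_C]

theorem coeffMap_eq_num_div_denom (ψ : K →+* L) (f : RatFunc K) :
    coeffMap ψ f = algebraMap _ _ (f.num.map ψ) / algebraMap _ _ (f.denom.map ψ) := by
  conv_lhs => rw [← num_div_denom f]
  rw [coeffMap_algebraMap_div]

theorem coeffMap_coeffMap (ψ : K →+* L) (χ : L →+* M) (f : RatFunc K) :
    coeffMap χ (coeffMap ψ f) = coeffMap (χ.comp ψ) f := by
  rw [coeffMap_eq_num_div_denom ψ, coeffMap_algebraMap_div, coeffMap_eq_num_div_denom,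
    map_map, map_map]

theorem num_denom_algebraMap_div_of_isCoprime {p q : K[X]} (hq : q.Monic)
    (hpq : IsCoprime p q) :
    (algebraMap _ (RatFunc K) p / algebraMap _ _ q).num = p ∧
      (algebraMap _ (RatFunc K) p / algebraMap _ _ q).denom = q := by
  set f := algebraMap _ (RatFunc K) p / algebraMap _ _ q
  have hcross : f.num * q = p * f.denom := (num_mul_eq_mul_denom_iff hq.ne_zero).mpr rfl
  have hdenom : f.denom = q := by
    refine eq_of_monic_of_associated (monic_denom f) hq (associated_of_dvd_dvd ?_ ?_)
    · exact (isCoprime_num_denom f).symm.dvd_of_dvd_mul_left ⟨p, by rw [hcross, mul_comm]⟩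
    · exact hpq.symm.dvd_of_dvd_mul_left ⟨f.num, by rw [← hcross, mul_comm]⟩
  refine ⟨mul_right_cancel₀ hq.ne_zero ?_, hdenom⟩
  rw [hcross, hdenom]

theorem num_denom_coeffMap (ψ : K →+* L) (f : RatFunc K) :
    (coeffMap ψ f).num = f.num.map ψ ∧ (coeffMap ψ f).denom = f.denom.map ψ := by
  rw [coeffMap_eq_num_div_denom]
  refine num_denom_algebraMap_div_of_isCoprime ((monic_denom f).map ψ) ?_
  simpa using (isCoprime_num_denom f).map (Polynomial.mapRingHom ψ)

end CoeffMap

section Derivation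

variable {K L : Type*} [Field K] [Field L]

theorem derivation_algebraMap {D : Derivation K (RatFunc K) (RatFunc K)} (hD : D X = 1)
    (p : K[X]) : D (algebraMap _ _ p) = algebraMap _ _ (derivative p) := by
  rw [← aeval_X_left_eq_algebraMap, D.map_aeval, hD, smul_eq_mul, mul_one,
    aeval_X_left_eq_algebraMap]

theorem derivation_coeffMap {D : Derivation K (RatFunc K) (RatFunc K)}
    {D' : Derivation L (RatFunc L) (RatFunc L)} (hD : D X = 1) (hD' : D' X = 1)
    (ψ : K →+* L) (f : RatFunc K) : D' (coeffMap ψ f) = coeffMap ψ (D f) := by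
  conv_rhs => rw [← num_div_denom f]
  rw [coeffMap_eq_num_div_denom, Derivation.leibniz_div, Derivation.leibniz_div,
    derivation_algebraMap hD, derivation_algebraMap hD, derivation_algebraMap hD',
    derivation_algebraMap hD']
  simp only [smul_eq_mul, map_mul, map_sub, map_pow, map_inv₀, coeffMap_algebraMap,
    derivative_map]

theorem eq_C_of_derivation_eq_zero [CharZero K] {D : Derivation K (RatFunc K) (RatFunc K)}
    (hD : D X = 1) {f : RatFunc K} (hf : D f = 0) : ∃ c, f = C c := by
  have hdenom : algebraMap _ (RatFunc K) f.denom ≠ 0 := algebraMap_ne_zero (denom_ne_zero f)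
  have hwronskian : f.denom * derivative f.num = f.num * derivative f.denom := by
    apply algebraMap_injective K
    rw [← num_div_denom f, Derivation.leibniz_div, derivation_algebraMap hD,
      derivation_algebraMap hD] at hf
    simpa [hdenom, sub_eq_zero] using hf
  have hdenom_const : derivative f.denom = 0 := by
    refine eq_zero_of_dvd_of_degree_lt ?_ (degree_derivative_lt (denom_ne_zero f))
    exact (isCoprime_num_denom f).symm.dvd_of_dvd_mul_left ⟨_, hwronskian.symm⟩
  have hdenom_one : f.denom = 1 :=
    (monic_denom f).natDegree_eq_zero.mp (derivative_eq_zero.mp hdenom_const)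
  have hnum_const : derivative f.num = 0 := by
    simpa [hdenom_const, hdenom_one] using hwronskian
  refine ⟨f.num.coeff 0, ?_⟩
  rw [← num_div_denom f, hdenom_one,
    eq_C_of_natDegree_eq_zero (derivative_eq_zero.mp hnum_const)]
  simp

end Derivation

theorem polynomialPart_unique {K : Type*} [Field K] {P₁ p₁ q₁ P₂ p₂ q₂ : K[X]} (hq₁ : q₁ ≠ 0)
    (hq₂ : q₂ ≠ 0) (hpq₁ : p₁.degree < q₁.degree) (hpq₂ : p₂.degree < q₂.degree)
    (h : algebraMap _ (RatFunc K) P₁ + algebraMap _ _ p₁ / algebraMap _ _ q₁ =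
      algebraMap _ _ P₂ + algebraMap _ _ p₂ / algebraMap _ _ q₂) :
    P₁ = P₂ := by
  have hcross : (P₁ - P₂) * (q₁ * q₂) = p₂ * q₁ - p₁ * q₂ := by
    apply algebraMap_injective K
    field_simp [algebraMap_ne_zero hq₁, algebraMap_ne_zero hq₂] at h
    simp only [map_mul, map_sub]
    linear_combination h
  have hdeg : (p₂ * q₁ - p₁ * q₂).degree < (q₁ * q₂).degree := by
    rw [degree_mul]
    refine (degree_sub_le _ _).trans_lt (max_lt ?_ ?_) <;> rw [degree_mul]
    · rw [add_comm q₁.degree]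
      exact WithBot.add_lt_add_right (degree_ne_bot.mpr hq₁) hpq₂
    · exact WithBot.add_lt_add_right (degree_ne_bot.mpr hq₂) hpq₁
  have hzero := eq_zero_of_dvd_of_degree_lt ⟨_, hcross.symm.trans (mul_comm _ _)⟩ hdeg
  rw [← hcross, mul_eq_zero, sub_eq_zero] at hzero
  exact hzero.resolve_right (mul_ne_zero hq₁ hq₂)

section Galois

variable {F A : Type*} [Field F] [Field A] [Algebra F A]
  {D : Derivation A (RatFunc A) (RatFunc A)} {f : RatFunc A} {P p q : A[X]}

theorem coeffMap_algEquiv_coeffMap_algebraMap (σ : Gal(A/F)) (g : RatFunc F) :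
    coeffMap (σ : A →+* A) (coeffMap (algebraMap F A) g) = coeffMap (algebraMap F A) g := by
  rw [coeffMap_coeffMap, show (σ : A →+* A).comp (algebraMap F A) = algebraMap F A from
    RingHom.ext σ.commutes]

theorem coeffMap_algEquiv_eq_add_C [CharZero A] (hD : D X = 1)
    (hf : ∃ h : RatFunc F, D f = coeffMap (algebraMap F A) h) (hq : q ≠ 0)
    (hpq : p.degree < q.degree)
    (hdec : f = algebraMap _ _ P + algebraMap _ _ p / algebraMap _ _ q) (σ : Gal(A/F)) :
    coeffMap (σ : A →+* A) f = f + C (σ (P.coeff 0) - P.coeff 0) := by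
  obtain ⟨h, hh⟩ := hf
  obtain ⟨c, hc⟩ := eq_C_of_derivation_eq_zero hD (f := coeffMap (σ : A →+* A) f - f) <| by
    rw [map_sub, derivation_coeffMap hD hD, hh, coeffMap_algEquiv_coeffMap_algebraMap, sub_self]
  have hP : P.map (σ : A →+* A) = P + Polynomial.C c := by
    refine polynomialPart_unique (p₁ := p.map (σ : A →+* A)) (Polynomial.map_ne_zero hq) hq
      (by rwa [degree_map p (σ : A →+* A), degree_map q (σ : A →+* A)]) hpq ?_
    rw [map_add, algebraMap_C, add_right_comm, ← hdec, ← sub_eq_iff_eq_add'.mp hc,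
      ← coeffMap_algebraMap, ← coeffMap_algebraMap, ← coeffMap_algebraMap, ← map_div₀,
      ← map_add, ← hdec]
  have hc0 := congrArg (coeff · 0) hP
  simp only [coeff_map, coeff_add, coeff_C_zero] at hc0
  rw [sub_eq_iff_eq_add'.mp hc, show σ (P.coeff 0) = P.coeff 0 + c from hc0,
    add_sub_cancel_left]

variable [IsGalois F A]

theorem _root_.Polynomial.mem_lifts_of_forall_map_eq
    (hp : ∀ σ : Gal(A/F), p.map (σ : A →+* A) = p) : p ∈ lifts (algebraMap F A) :=
  (lifts_iff_coeff_lifts p).mpr fun n =>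
    (InfiniteGalois.mem_range_algebraMap_iff_fixed _).mpr fun σ => by
      simpa using congrArg (coeff · n) (hp σ)

theorem exists_coeffMap_eq_of_forall_coeffMap_eq
    (hf : ∀ σ : Gal(A/F), coeffMap (σ : A →+* A) f = f) :
    ∃ g : RatFunc F, coeffMap (algebraMap F A) g = f := by
  obtain ⟨N, hN⟩ := mem_lifts _ |>.mp <| mem_lifts_of_forall_map_eq (F := F) fun σ => by
    rw [← (num_denom_coeffMap _ f).1, hf σ]
  obtain ⟨Q, hQ⟩ := mem_lifts _ |>.mp <| mem_lifts_of_forall_map_eq (F := F) fun σ => by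
    rw [← (num_denom_coeffMap _ f).2, hf σ]
  exact ⟨algebraMap _ _ N / algebraMap _ _ Q, by
    rw [coeffMap_algebraMap_div, hN, hQ, num_div_denom]⟩

theorem exists_eq_coeffMap_add_C_coeff_zero [CharZero A] (hD : D X = 1)
    (hf : ∃ h : RatFunc F, D f = coeffMap (algebraMap F A) h) (hq : q ≠ 0)
    (hpq : p.degree < q.degree)
    (hdec : f = algebraMap _ _ P + algebraMap _ _ p / algebraMap _ _ q) :
    (∃ g : RatFunc F, f = coeffMap (algebraMap F A) g + C (P.coeff 0)) ∧
      ((∃ g : RatFunc F, f = coeffMap (algebraMap F A) g) ↔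
        P.coeff 0 ∈ Set.range (algebraMap F A)) := by
  have hσ := coeffMap_algEquiv_eq_add_C hD hf hq hpq hdec
  obtain ⟨g, hg⟩ := exists_coeffMap_eq_of_forall_coeffMap_eq (F := F)
    (f := f - C (P.coeff 0)) fun σ => by
      rw [map_sub, hσ σ, coeffMap_C, map_sub, RingHom.coe_coe]
      abel
  refine ⟨⟨g, by rw [hg, sub_add_cancel]⟩, ⟨?_, ?_⟩⟩
  · rintro ⟨g₀, rfl⟩
    refine (InfiniteGalois.mem_range_algebraMap_iff_fixed _).mpr fun σ => ?_
    have h := hσ σ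
    rw [coeffMap_algEquiv_coeffMap_algebraMap, left_eq_add,
      map_eq_zero_iff _ (RingHom.injective _), sub_eq_zero] at h
    exact h
  · rintro ⟨c, hc⟩
    exact ⟨g + C c, by rw [map_add, coeffMap_C, hc, hg, sub_add_cancel]⟩

end Galois

end RatFunc

theorem liftRF_eq_coeffMap {K L : Type*} [Field K] [Field L] (ψ : K →+* L) :
    liftRF ψ = RatFunc.coeffMap ψ :=
  funext fun f => (RatFunc.coeffMap_eq_num_div_denom ψ f).symm

/-- Lemma 4.2: let `k` be a field of characteristic zero, `F = k(x₁,…,x_{m-1})`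
(realized with `p = m-1` variables), `K = F(x_m)`, and `F̄` the algebraic closure of
`F`.  If `f ∈ F̄(x_m)` has `∂_m(f) ∈ K` and `f = P + p/q` with polynomial part `P` and
`deg p < deg q`, then `f = g + c₀` with `g ∈ K` and `c₀ = P(0)` the constant part of
`f`; consequently `f ∈ K ↔ c₀ ∈ F`. -/
theorem stmt_15 (k : Type*) [Field k] [CharZero k] (p : ℕ)
    (Dm : Derivation (AlgebraicClosure (FractionRing (MvPolynomial (Fin p) k)))
      (RatFunc (AlgebraicClosure (FractionRing (MvPolynomial (Fin p) k))))
      (RatFunc (AlgebraicClosure (FractionRing (MvPolynomial (Fin p) k)))))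
    (hDm : Dm RatFunc.X = 1)
    (f : RatFunc (AlgebraicClosure (FractionRing (MvPolynomial (Fin p) k))))
    (hf : ∃ h : RatFunc (FractionRing (MvPolynomial (Fin p) k)),
      Dm f = liftRF (algebraMap (FractionRing (MvPolynomial (Fin p) k))
        (AlgebraicClosure (FractionRing (MvPolynomial (Fin p) k)))) h)
    (P pp qq : Polynomial (AlgebraicClosure (FractionRing (MvPolynomial (Fin p) k))))
    (hq : qq ≠ 0) (hdeg : pp.degree < qq.degree)
    (hdec : f = algebraMap (Polynomial _) (RatFunc _) P +
      algebraMap (Polynomial _) (RatFunc _) pp / algebraMap (Polynomial _) (RatFunc _) qq) :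
    (∃ g : RatFunc (FractionRing (MvPolynomial (Fin p) k)),
      f = liftRF (algebraMap (FractionRing (MvPolynomial (Fin p) k))
          (AlgebraicClosure (FractionRing (MvPolynomial (Fin p) k)))) g +
        RatFunc.C (P.coeff 0)) ∧
    ((∃ g : RatFunc (FractionRing (MvPolynomial (Fin p) k)),
        f = liftRF (algebraMap (FractionRing (MvPolynomial (Fin p) k))
          (AlgebraicClosure (FractionRing (MvPolynomial (Fin p) k)))) g) ↔
      P.coeff 0 ∈ Set.range (algebraMap (FractionRing (MvPolynomial (Fin p) k))
        (AlgebraicClosure (FractionRing (MvPolynomial (Fin p) k))))) := by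
  rw [liftRF_eq_coeffMap] at hf ⊢
  exact RatFunc.exists_eq_coeffMap_add_C_coeff_zero hDm hf hq hdeg hdec
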